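/- arXiv:2210.03268 — 2 statements merged into one kernel-verified Lean document; each statement's English description precedes it below -/
import Mathlib

section
/- For every α ∈ [0,1], F(α) is a non-disturbing n-cycle behavior with Ω_γ(F(α)) = n + 2(α − 1). In particular Ω_γ(B_NPR) = n − 2, the behavior B_NPR = F(0) is noncontextual, and F(α) is contextual for every α ∈ (0,1]. -/
open Finset

/-- The outcome value `±1` encoded by a `Bool`. -/
def sval (b : Bool) : ℝ := if b then 1 else -1

/-- An `n`-cycle behavior: for each context `{X_i, X_{i+1}}` (`i ∈ ZMod n`) a
probability distribution `p i` on pairs of `±1` outcomes (encoded as `Bool`s). -/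
def IsNCycleBehavior (n : ℕ) (p : ZMod n → Bool → Bool → ℝ) : Prop :=
  (∀ i a b, 0 ≤ p i a b) ∧ ∀ i : ZMod n, ∑ a : Bool, ∑ b : Bool, p i a b = 1

/-- Non-disturbance: for all `i` and `b`, `Σ_a p_i(a,b) = Σ_c p_{i+1}(b,c)`. -/
def NCycleNonDisturbing (n : ℕ) (p : ZMod n → Bool → Bool → ℝ) : Prop :=
  ∀ (i : ZMod n) (b : Bool), ∑ a : Bool, p i a b = ∑ c : Bool, p (i + 1) b c

/-- Noncontextuality: existence of a global probability distribution `q` on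
`ZMod n → Bool` whose marginals reproduce all the `p i`. -/
def NCycleNoncontextual (n : ℕ) [NeZero n] (p : ZMod n → Bool → Bool → ℝ) : Prop :=
  ∃ q : (ZMod n → Bool) → ℝ, (∀ x, 0 ≤ q x) ∧ (∑ x : ZMod n → Bool, q x = 1) ∧
    ∀ (i : ZMod n) (a b : Bool),
      p i a b = ∑ x : ZMod n → Bool, (if x i = a ∧ x (i + 1) = b then q x else 0)

/-- A sign vector: `γ : ZMod n → {-1, 1}` with an odd number of entries equal to `-1`. -/
def IsSignVector (n : ℕ) (γ : ZMod n → ℝ) : Prop :=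
  (∀ i, γ i = 1 ∨ γ i = -1) ∧ ∃ S : Finset (ZMod n), Odd S.card ∧ ∀ i, γ i = -1 ↔ i ∈ S

/-- The noncontextuality functional `Ω_γ(p) = Σ_i γ(i) ⟨X_i X_{i+1}⟩_p`, where
`⟨X_i X_{i+1}⟩_p = Σ_{a,b} a·b·p_i(a,b)`. -/
noncomputable def OmegaNC (n : ℕ) [NeZero n] (γ : ZMod n → ℝ)
    (p : ZMod n → Bool → Bool → ℝ) : ℝ :=
  ∑ i : ZMod n, γ i * ∑ a : Bool, ∑ b : Bool, sval a * sval b * p i a b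

/-- A type-preserving noncontextual wiring on the `n`-cycle scenario: a finite set `Λ`
(of natural numbers) with a probability distribution `ρ`; a finite set `R` with
pre-processing distributions `q j (·|λ)` on `R`; a context-selection map `g`; and
post-processing distributions `m j (·|r, s, λ)` on `{-1,1}` (encoded as `Bool`). -/
structure NCWiring (n : ℕ) where
  Λ : Finset ℕ
  ρ : ℕ → ℝ
  ρ_nonneg : ∀ l ∈ Λ, 0 ≤ ρ l
  ρ_sum : ∑ l ∈ Λ, ρ l = 1
  R : Finset ℕ
  q : ZMod n → ℕ → ℕ → ℝ
  q_nonneg : ∀ j l r, 0 ≤ q j l r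
  q_sum : ∀ j : ZMod n, ∀ l ∈ Λ, ∑ r ∈ R, q j l r = 1
  g : ZMod n → ℕ → ℕ → ZMod n
  m : ZMod n → ℕ → Bool → ℕ → Bool → ℝ
  m_nonneg : ∀ j r s l t, 0 ≤ m j r s l t
  m_sum : ∀ j r s l, ∑ t : Bool, m j r s l t = 1

/-- The action of a noncontextual wiring on a behavior:
`(W(B))_i(t,t') = Σ_λ ρ(λ) Σ_{r,r'} q_i(r|λ) q_{i+1}(r'|λ)
  Σ_{s,s'} p_{g(i,r,r')}(s,s') m_i(t|r,s,λ) m_{i+1}(t'|r',s',λ)`. -/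
def NCWiring.apply {n : ℕ} (W : NCWiring n) (p : ZMod n → Bool → Bool → ℝ) :
    ZMod n → Bool → Bool → ℝ :=
  fun i t t' => ∑ l ∈ W.Λ, W.ρ l * ∑ r ∈ W.R, ∑ r' ∈ W.R,
    W.q i l r * W.q (i + 1) l r' * ∑ s : Bool, ∑ s' : Bool,
      p (W.g i r r') s s' * W.m i r s l t * W.m (i + 1) r' s' l t'

/-- A wiring is deterministic when every pre-processing distribution `q j (·|λ)` and
every post-processing distribution `m j (·|r,s,λ)` is a point mass. -/
def NCWiring.IsDeterministic {n : ℕ} (W : NCWiring n) : Prop :=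
  (∀ j : ZMod n, ∀ l ∈ W.Λ, ∃ r₀ ∈ W.R, ∀ r ∈ W.R, W.q j l r = if r = r₀ then 1 else 0) ∧
  (∀ (j : ZMod n) (r : ℕ) (s : Bool) (l : ℕ),
    ∃ t₀ : Bool, ∀ t : Bool, W.m j r s l t = if t = t₀ then 1 else 0)

/-- `B → B'`: some type-preserving noncontextual wiring maps `B` to `B'`. -/
def NCConvertsTo (n : ℕ) (B B' : ZMod n → Bool → Bool → ℝ) : Prop :=
  ∃ W : NCWiring n, W.apply B = B'

/-- The PR-like behavior for a sign vector `γ`: `(B_PR)_i(a,b) = (1 + γ(i)·a·b)/4`. -/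
noncomputable def BPR (n : ℕ) (γ : ZMod n → ℝ) : ZMod n → Bool → Bool → ℝ :=
  fun i a b => (1 + γ i * sval a * sval b) / 4

/-- The noisy-PR behavior `B_NPR = ((n-2)/n)·B_PR + (2/n)·B_∅`, where
`B_∅` is the maximally mixed behavior with all probabilities `1/4`. -/
noncomputable def BNPR (n : ℕ) (γ : ZMod n → ℝ) : ZMod n → Bool → Bool → ℝ :=
  fun i a b => (((n : ℝ) - 2) / (n : ℝ)) * BPR n γ i a b + (2 / (n : ℝ)) * (1 / 4)

/-- The interpolating family `F(α) = α·B_PR + (1-α)·B_NPR`. -/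
noncomputable def Fmix (n : ℕ) (γ : ZMod n → ℝ) (α : ℝ) : ZMod n → Bool → Bool → ℝ :=
  fun i a b => α * BPR n γ i a b + (1 - α) * BNPR n γ i a b

/-!
Write `corrBehavior e` for the behavior with uniform marginals and correlators
`⟨X_i X_{i+1}⟩ = e i`; it is a non-disturbing behavior whenever `|e i| ≤ 1`, and
`F(α) = corrBehavior ((1 - 2(1-α)/n) γ)`, so `Ω_γ(F(α)) = n - 2(1-α)`.

A deterministic assignment `x` has `Ω_γ = Σ_i γ(i) x_i x_{i+1}`, a sum of `n` signs whose product
is `∏ γ = -1`; so one of them is `-1`, and every noncontextual behavior has `Ω_γ ≤ n - 2`.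
This excludes `α > 0`. Conversely, flipping `γ` on a single edge `j` gives signs with product `1`,
which are the edge products `x_i x_{i+1}` of an assignment `x`. The even mixture of `x` and its
global flip is `corrBehavior` of these signs, and averaging over `j` gives correlators
`(1 - 2/n) γ`, those of `B_NPR`.
-/

lemma sval_mul_self (b : Bool) : sval b * sval b = 1 := by
  cases b <;> norm_num [sval]

lemma abs_sval (b : Bool) : |sval b| = 1 := by
  cases b <;> norm_num [sval]

lemma sval_eq_one_or_eq_neg_one (b : Bool) : sval b = 1 ∨ sval b = -1 := by
  cases b <;> simp [sval]

lemma sum_le_card_sub_two_of_prod_eq_neg_one {ι : Type*} (s : Finset ι) (t : ι → ℝ)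
    (ht : ∀ i ∈ s, t i = 1 ∨ t i = -1) (hprod : ∏ i ∈ s, t i = -1) :
    ∑ i ∈ s, t i ≤ s.card - 2 := by
  classical
  obtain ⟨i₀, hi₀, hti₀⟩ : ∃ i₀ ∈ s, t i₀ = -1 := by
    by_contra! h
    have : ∏ i ∈ s, t i = 1 := prod_eq_one fun i hi => (ht i hi).resolve_right (h i hi)
    linarith
  have hrest : ∑ i ∈ s.erase i₀, t i ≤ (s.erase i₀).card := by
    simpa using sum_le_card_nsmul (s.erase i₀) t 1
      fun i hi => by rcases ht i (mem_of_mem_erase hi) with h | h <;> norm_num [h]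
  rw [card_erase_of_mem hi₀, Nat.cast_pred (card_pos.mpr ⟨i₀, hi₀⟩)] at hrest
  rw [← add_sum_erase s t hi₀, hti₀]
  linarith

lemma sum_ite_eq_neg_one_one {ι : Type*} [Fintype ι] [DecidableEq ι] (i : ι) :
    ∑ j, (if i = j then (-1 : ℝ) else 1) = Fintype.card ι - 2 := by
  rw [sum_ite, filter_eq, filter_ne]
  simp only [mem_univ, if_true, sum_const, card_singleton, card_erase_of_mem, card_univ,
    nsmul_eq_mul, Nat.cast_pred (Fintype.card_pos_iff.mpr ⟨i⟩)]
  ring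

lemma IsSignVector.abs_eq_one {n : ℕ} {γ : ZMod n → ℝ} (hγ : IsSignVector n γ) (i : ZMod n) :
    |γ i| = 1 := by
  rcases hγ.1 i with h | h <;> simp [h]

section NCycle

variable {n : ℕ} [NeZero n]

lemma IsSignVector.prod_eq_neg_one {γ : ZMod n → ℝ} (hγ : IsSignVector n γ) :
    ∏ i, γ i = -1 := by
  obtain ⟨hpm, S, hodd, hS⟩ := hγ
  rw [← prod_sdiff (subset_univ S), prod_congr rfl fun i hi => (hS i).mpr hi, prod_const,
    hodd.neg_one_pow, mul_neg_one, neg_inj]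
  exact prod_eq_one fun i hi => (hpm i).resolve_right fun h => (mem_sdiff.mp hi).2 ((hS i).mp h)

lemma prod_range_natCast_eq_prod (f : ZMod n → ℝ) :
    ∏ m ∈ range n, f m = ∏ i, f i :=
  prod_nbij' (fun m => (m : ZMod n)) ZMod.val (fun _ _ => mem_univ _)
    (fun i _ => mem_range.mpr (ZMod.val_lt i)) (fun _ hm => ZMod.val_cast_of_lt (mem_range.mp hm))
    (fun i _ => ZMod.natCast_zmod_val i) fun _ _ => rfl

lemma exists_sval_mul_sval_eq (s : ZMod n → ℝ) (hs : ∀ i, s i = 1 ∨ s i = -1)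
    (hprod : ∏ i, s i = 1) : ∃ x : ZMod n → Bool, ∀ i, sval (x i) * sval (x (i + 1)) = s i := by
  set P : ℕ → ℝ := fun k => ∏ m ∈ range k, s m
  have hP : ∀ k, P k = 1 ∨ P k = -1 := by
    intro k
    induction k with
    | zero => simp [P]
    | succ k ih =>
      rw [show P (k + 1) = P k * s k from prod_range_succ _ _]
      rcases ih with h | h <;> rcases hs k with h' | h' <;> simp [h, h']
  have hstep : ∀ i : ZMod n, P (i + 1).val = P i.val * s i := by
    intro i
    have hsucc : P (i.val + 1) = P i.val * s i := by
      simp only [P, prod_range_succ, ZMod.natCast_zmod_val]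
    have hcast : i + 1 = ((i.val + 1 : ℕ) : ZMod n) := by
      rw [Nat.cast_succ, ZMod.natCast_zmod_val]
    rw [hcast, ZMod.val_natCast, ← hsucc]
    rcases (show i.val + 1 ≤ n from ZMod.val_lt i).lt_or_eq with h | h
    · rw [Nat.mod_eq_of_lt h]
    · rw [h, Nat.mod_self]
      simp only [P, prod_range_zero, prod_range_natCast_eq_prod, hprod]
  refine ⟨fun i => decide (P i.val = 1), fun i => ?_⟩
  have hx : ∀ k, sval (decide (P k = 1)) = P k := fun k => by
    rcases hP k with h | h <;> norm_num [sval, h]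
  rw [hx, hx, hstep, ← mul_assoc, mul_self_eq_one_iff.mpr (hP _), one_mul]

end NCycle

noncomputable def corrBehavior (n : ℕ) (e : ZMod n → ℝ) : ZMod n → Bool → Bool → ℝ :=
  fun i a b => (1 + e i * sval a * sval b) / 4

section NCycleBehavior

variable {n : ℕ}

lemma isNCycleBehavior_corrBehavior {e : ZMod n → ℝ} (he : ∀ i, |e i| ≤ 1) :
    IsNCycleBehavior n (corrBehavior n e) := by
  refine ⟨fun i a b => ?_, fun i => ?_⟩
  · have habs : |e i * sval a * sval b| ≤ 1 := by
      rw [abs_mul, abs_mul, abs_sval, abs_sval, mul_one, mul_one]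
      exact he i
    have := neg_le_of_abs_le habs
    simp only [corrBehavior]
    linarith
  · simp only [corrBehavior, Fintype.sum_bool, sval, if_true, Bool.false_eq_true, if_false]
    ring

lemma nCycleNonDisturbing_corrBehavior (e : ZMod n → ℝ) :
    NCycleNonDisturbing n (corrBehavior n e) := by
  intro i b
  cases b <;> simp only [corrBehavior, Fintype.sum_bool, sval, if_true, Bool.false_eq_true,
    if_false] <;> ring

lemma sum_mul_corrBehavior {ι : Type*} [Fintype ι] (w : ι → ℝ) (hw : ∑ j, w j = 1)
    (e : ι → ZMod n → ℝ) (i : ZMod n) (a b : Bool) :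
    ∑ j, w j * corrBehavior n (e j) i a b = corrBehavior n (fun i => ∑ j, w j * e j i) i a b := by
  simp only [corrBehavior, mul_div_assoc', ← sum_div, mul_add, mul_one, sum_add_distrib, hw, sum_mul]
  congr 2
  exact sum_congr rfl fun j _ => by ring

variable [NeZero n]

lemma omegaNC_corrBehavior (γ e : ZMod n → ℝ) :
    OmegaNC n γ (corrBehavior n e) = ∑ i, γ i * e i := by
  refine sum_congr rfl fun i _ => ?_
  simp only [corrBehavior, Fintype.sum_bool, sval, if_true, Bool.false_eq_true, if_false]
  ring

lemma BNPR_eq_corrBehavior (γ : ZMod n → ℝ) :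
    BNPR n γ = corrBehavior n fun i => (1 - 2 / n) * γ i := by
  have : (n : ℝ) ≠ 0 := NeZero.ne _
  funext i a b
  simp only [BNPR, BPR, corrBehavior]
  field_simp
  ring

lemma Fmix_eq_corrBehavior (γ : ZMod n → ℝ) (α : ℝ) :
    Fmix n γ α = corrBehavior n fun i => (1 - 2 * (1 - α) / n) * γ i := by
  have : (n : ℝ) ≠ 0 := NeZero.ne _
  funext i a b
  simp only [Fmix, BNPR, BPR, corrBehavior]
  field_simp
  ring

end NCycleBehavior

def detBehavior (n : ℕ) (x : ZMod n → Bool) : ZMod n → Bool → Bool → ℝ :=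
  fun i a b => if x i = a ∧ x (i + 1) = b then 1 else 0

lemma corrBehavior_sval_mul_sval {n : ℕ} (x : ZMod n → Bool) (i : ZMod n) (a b : Bool) :
    corrBehavior n (fun i => sval (x i) * sval (x (i + 1))) i a b =
      ∑ c : Bool, 1 / 2 * detBehavior n (fun k => xor c (x k)) i a b := by
  simp only [corrBehavior, detBehavior]
  suffices ∀ u v : Bool, (1 + sval u * sval v * sval a * sval b) / 4 =
      ∑ c : Bool, 1 / 2 * (if xor c u = a ∧ xor c v = b then 1 else 0) from this _ _
  intro u v
  cases u <;> cases v <;> cases a <;> cases b <;> norm_num [sval]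

section Noncontextual

variable {n : ℕ} [NeZero n]

lemma sum_sum_mul_marginal (q : (ZMod n → Bool) → ℝ) (f : Bool → Bool → ℝ) (i : ZMod n) :
    ∑ a, ∑ b, f a b * ∑ x : ZMod n → Bool, (if x i = a ∧ x (i + 1) = b then q x else 0) =
      ∑ x, q x * f (x i) (x (i + 1)) := by
  simp only [mul_sum]
  rw [sum_congr rfl fun a _ => sum_comm, sum_comm]
  refine sum_congr rfl fun x _ => ?_
  simp [ite_and, mul_comm]

lemma NCycleNoncontextual.omegaNC_le {γ : ZMod n → ℝ} {p : ZMod n → Bool → Bool → ℝ}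
    (hp : NCycleNoncontextual n p) (hγ : IsSignVector n γ) : OmegaNC n γ p ≤ n - 2 := by
  obtain ⟨q, hq0, hq1, hqp⟩ := hp
  have hdet : ∀ x : ZMod n → Bool, ∑ i, γ i * (sval (x i) * sval (x (i + 1))) ≤ n - 2 := by
    intro x
    have hshift : ∏ i, sval (x (i + 1)) = ∏ i, sval (x i) :=
      Equiv.prod_comp (Equiv.addRight 1) fun i => sval (x i)
    have hprod : ∏ i, γ i * (sval (x i) * sval (x (i + 1))) = -1 := by
      rw [prod_mul_distrib, prod_mul_distrib, hγ.prod_eq_neg_one, hshift, ← prod_mul_distrib,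
        prod_eq_one fun i _ => sval_mul_self (x i), mul_one]
    have hpm : ∀ i ∈ univ, γ i * (sval (x i) * sval (x (i + 1))) = 1 ∨
        γ i * (sval (x i) * sval (x (i + 1))) = -1 := fun i _ => by
      rcases hγ.1 i with h | h <;> rcases sval_eq_one_or_eq_neg_one (x i) with ha | ha <;>
        rcases sval_eq_one_or_eq_neg_one (x (i + 1)) with hb | hb <;> norm_num [h, ha, hb]
    simpa using sum_le_card_sub_two_of_prod_eq_neg_one univ _ hpm hprod
  have hcorr : ∀ i, ∑ a, ∑ b, sval a * sval b * p i a b =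
      ∑ x, q x * (sval (x i) * sval (x (i + 1))) := fun i => by
    simp only [hqp]
    exact sum_sum_mul_marginal q (fun a b => sval a * sval b) i
  calc OmegaNC n γ p = ∑ x, q x * ∑ i, γ i * (sval (x i) * sval (x (i + 1))) := by
        simp only [OmegaNC, hcorr, mul_sum]
        rw [sum_comm]
        exact sum_congr rfl fun x _ => sum_congr rfl fun i _ => by ring
    _ ≤ ∑ x, q x * (n - 2) := sum_le_sum fun x _ => mul_le_mul_of_nonneg_left (hdet x) (hq0 x)
    _ = n - 2 := by rw [← sum_mul, hq1, one_mul]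

lemma NCycleNoncontextual.sum_mul {ι : Type*} [Fintype ι] (w : ι → ℝ) (hw0 : ∀ j, 0 ≤ w j)
    (hw1 : ∑ j, w j = 1) (p : ι → ZMod n → Bool → Bool → ℝ)
    (hp : ∀ j, NCycleNoncontextual n (p j)) :
    NCycleNoncontextual n fun i a b => ∑ j, w j * p j i a b := by
  choose q hq0 hq1 hqp using hp
  refine ⟨fun x => ∑ j, w j * q j x, fun x => sum_nonneg fun j _ => mul_nonneg (hw0 j) (hq0 j x),
    ?_, fun i a b => ?_⟩
  · rw [sum_comm]
    simp [← mul_sum, hq1, hw1]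
  · simp only [hqp, mul_sum]
    rw [sum_comm]
    refine sum_congr rfl fun x _ => ?_
    split_ifs <;> simp

lemma nCycleNoncontextual_detBehavior (x : ZMod n → Bool) :
    NCycleNoncontextual n (detBehavior n x) := by
  classical
  refine ⟨fun y => if y = x then 1 else 0, fun y => by positivity, by simp, fun i a b => ?_⟩
  rw [Fintype.sum_eq_single x fun y hy => by simp [hy]]
  simp [detBehavior]

lemma nCycleNoncontextual_corrBehavior_sval_mul_sval (x : ZMod n → Bool) :
    NCycleNoncontextual n (corrBehavior n fun i => sval (x i) * sval (x (i + 1))) := by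
  have := NCycleNoncontextual.sum_mul (fun _ => 1 / 2) (fun _ => by norm_num) (by norm_num)
    _ fun c => nCycleNoncontextual_detBehavior fun k => xor c (x k)
  convert this using 1
  funext i a b
  exact corrBehavior_sval_mul_sval x i a b

lemma nCycleNoncontextual_BNPR {γ : ZMod n → ℝ} (hγ : IsSignVector n γ) :
    NCycleNoncontextual n (BNPR n γ) := by
  classical
  set s : ZMod n → ZMod n → ℝ := fun j i => (if i = j then -1 else 1) * γ i
  have hs : ∀ j, ∃ x : ZMod n → Bool, ∀ i, sval (x i) * sval (x (i + 1)) = s j i := by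
    intro j
    refine exists_sval_mul_sval_eq (s j) (fun i => ?_) ?_
    · simp only [s]
      split_ifs <;> rcases hγ.1 i with h | h <;> norm_num [h]
    · rw [prod_mul_distrib, prod_ite_eq' univ j, hγ.prod_eq_neg_one]
      simp
  choose x hx using hs
  have hw : ∑ _j : ZMod n, 1 / (n : ℝ) = 1 := by simp
  have hmean : ∀ i, ∑ j, 1 / (n : ℝ) * s j i = (1 - 2 / n) * γ i := by
    intro i
    have : (n : ℝ) ≠ 0 := NeZero.ne _
    simp only [s, ← mul_assoc, ← sum_mul, ← mul_sum, sum_ite_eq_neg_one_one, ZMod.card]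
    field_simp
  have := NCycleNoncontextual.sum_mul _ (fun _ => by positivity) hw _
    fun j => nCycleNoncontextual_corrBehavior_sval_mul_sval (x j)
  rw [BNPR_eq_corrBehavior]
  convert this using 1
  funext i a b
  rw [sum_mul_corrBehavior _ hw]
  simp only [hx, hmean]

end Noncontextual

section Fmix

variable {n : ℕ} [NeZero n] {γ : ZMod n → ℝ}

lemma omegaNC_Fmix (hγ : IsSignVector n γ) (α : ℝ) :
    OmegaNC n γ (Fmix n γ α) = n + 2 * (α - 1) := by
  have : (n : ℝ) ≠ 0 := NeZero.ne _
  have hγγ : ∀ i, γ i * ((1 - 2 * (1 - α) / n) * γ i) = 1 - 2 * (1 - α) / n := fun i => by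
    rw [mul_left_comm, ← abs_mul_abs_self, hγ.abs_eq_one, mul_one, mul_one]
  simp only [Fmix_eq_corrBehavior, omegaNC_corrBehavior, hγγ, sum_const, card_univ, ZMod.card,
    nsmul_eq_mul]
  field_simp
  ring

lemma isNCycleBehavior_Fmix (hγ : IsSignVector n γ) {α : ℝ} (hα : α ∈ Set.Icc (0 : ℝ) 1) :
    IsNCycleBehavior n (Fmix n γ α) := by
  obtain ⟨hα0, hα1⟩ := hα
  have hn : (1 : ℝ) ≤ n := Nat.one_le_cast.mpr NeZero.one_le
  have hnoise : 2 * (1 - α) / n ≤ 2 := div_le_of_le_mul₀ (by linarith) zero_le_two (by nlinarith)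
  have hnoise' : 0 ≤ 2 * (1 - α) / n := by positivity
  rw [Fmix_eq_corrBehavior]
  refine isNCycleBehavior_corrBehavior fun i => ?_
  rw [abs_mul, hγ.abs_eq_one, mul_one, abs_le]
  constructor <;> linarith

end Fmix

theorem Fmix_properties_general (n : ℕ) [NeZero n]
    (γ : ZMod n → ℝ) (hγ : IsSignVector n γ) :
    (∀ α ∈ Set.Icc (0 : ℝ) 1,
      IsNCycleBehavior n (Fmix n γ α) ∧ NCycleNonDisturbing n (Fmix n γ α) ∧
        OmegaNC n γ (Fmix n γ α) = (n : ℝ) + 2 * (α - 1)) ∧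
    OmegaNC n γ (BNPR n γ) = (n : ℝ) - 2 ∧
    Fmix n γ 0 = BNPR n γ ∧
    NCycleNoncontextual n (BNPR n γ) ∧
    (∀ α ∈ Set.Ioc (0 : ℝ) 1, ¬ NCycleNoncontextual n (Fmix n γ α)) := by
  have hF0 : Fmix n γ 0 = BNPR n γ := by
    funext i a b
    simp [Fmix]
  refine ⟨fun α hα => ⟨isNCycleBehavior_Fmix hγ hα, ?_, omegaNC_Fmix hγ α⟩, ?_, hF0,
    nCycleNoncontextual_BNPR hγ, ?_⟩
  · rw [Fmix_eq_corrBehavior]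
    exact nCycleNonDisturbing_corrBehavior _
  · rw [← hF0, omegaNC_Fmix hγ]
    ring
  · rintro α ⟨hα0, -⟩ hnc
    have hbound := hnc.omegaNC_le hγ
    rw [omegaNC_Fmix hγ] at hbound
    linarith

/-- for every `α ∈ [0,1]`, `F(α)` is a non-disturbing `n`-cycle behavior
with `Ω_γ(F(α)) = n + 2(α - 1)`. In particular `Ω_γ(B_NPR) = n - 2`, the behavior
`B_NPR = F(0)` is noncontextual, and `F(α)` is contextual for every `α ∈ (0,1]`. -/
theorem Fmix_properties (n : ℕ) [NeZero n] (hn : 3 ≤ n)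
    (γ : ZMod n → ℝ) (hγ : IsSignVector n γ) :
    (∀ α ∈ Set.Icc (0 : ℝ) 1,
      IsNCycleBehavior n (Fmix n γ α) ∧ NCycleNonDisturbing n (Fmix n γ α) ∧
        OmegaNC n γ (Fmix n γ α) = (n : ℝ) + 2 * (α - 1)) ∧
    OmegaNC n γ (BNPR n γ) = (n : ℝ) - 2 ∧
    Fmix n γ 0 = BNPR n γ ∧
    NCycleNoncontextual n (BNPR n γ) ∧
    (∀ α ∈ Set.Ioc (0 : ℝ) 1, ¬ NCycleNoncontextual n (Fmix n γ α)) :=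
  Fmix_properties_general n γ hγ
end

section
/- For all 0 ≤ α < α′ ≤ 1: F(α′) → F(α) but not F(α) → F(α′). Consequently the family { F(α) : α ∈ [0,1] } is a strictly ordered chain with infinitely many pairwise inequivalent elements; hence the convertibility pre-order on non-disturbing n-cycle behaviors has infinite height and is locally infinite (the interval between F(1) = B_PR and F(0) = B_NPR contains infinitely many pairwise inequivalent behaviors). -/
/-!
In terms of the visibility `c = α + (1 - α)(n - 2)/n`, `F(α)_i(a, b) = (1 + c γ_i a b)/4`.
Lowering the visibility from `c` to `c'` is a wiring: with shared probability `c'/c` pass the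
behavior through, otherwise output uniformly random bits. Raising it is impossible because the
functional `Ω_γ = Σ_i γ_i ⟨X_i X_{i+1}⟩` equals `n c` on `F(α)`, while every wiring applied to a
behavior of visibility `c ≥ 1 - 2/n` yields `Ω_γ ≤ n c`.

For that bound fix the shared randomness; let `a_i` be the output bias of party `i` on a uniform
input and `d_i` the average absolute dependence of that bias on the input. Then `|a_i| + d_i ≤ 1`
and `Ω_γ ≤ Σ_i (γ_i a_i a_{i+1} + c d_i d_{i+1})`. As `∏ γ_i = -1`, some edge has
`γ_i a_i a_{i+1} = -|a_i| |a_{i+1}|`, and the right side becomes a form in `x_i = |a_i|` that is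
affine in each coordinate, hence maximal at a vertex of `[0, 1]ⁿ`, where it is at most `n c`.
-/

open Finset

namespace ZMod

theorem forall_of_imp_add_one {n : ℕ} [NeZero n] {P : ZMod n → Prop}
    (h : ∀ i, P i → P (i + 1)) {i : ZMod n} (hi : P i) (j : ZMod n) : P j := by
  have hk : ∀ k : ℕ, P (i + k) := by
    intro k
    induction k with
    | zero => simpa using hi
    | succ k ih => simpa [add_assoc] using h _ ih
  simpa using hk (j - i).val

theorem self_ne_add_one {n : ℕ} (hn : n ≠ 1) (i : ZMod n) : i ≠ i + 1 :=
  haveI := ZMod.nontrivial_iff.mpr hn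
  left_ne_add.mpr one_ne_zero

end ZMod

namespace IsSignVector

variable {n : ℕ} {γ : ZMod n → ℝ}

theorem abs_eq_one_s15 (hγ : IsSignVector n γ) (i : ZMod n) : |γ i| = 1 := by
  rcases hγ.1 i with h | h <;> simp [h]

theorem mul_self_eq_one (hγ : IsSignVector n γ) (i : ZMod n) : γ i * γ i = 1 := by
  rw [← abs_mul_abs_self, hγ.abs_eq_one_s15, one_mul]

theorem prod_eq_neg_one_s15 [NeZero n] (hγ : IsSignVector n γ) : ∏ i, γ i = -1 := by
  obtain ⟨hpm, S, hodd, hS⟩ := hγ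
  have hγS : ∀ i, γ i = if i ∈ S then -1 else 1 := by
    intro i
    split_ifs with h
    · exact (hS i).2 h
    · exact (hpm i).resolve_right (mt (hS i).1 h)
  simp_rw [hγS]
  rw [prod_ite_mem, univ_inter, prod_const, hodd.neg_one_pow]

theorem exists_mul_nonpos [NeZero n] (hγ : IsSignVector n γ) (a : ZMod n → ℝ) :
    ∃ i, γ i * (a i * a (i + 1)) ≤ 0 := by
  by_contra! h
  have hpos := prod_pos fun i (_ : i ∈ univ) => h i
  have hshift : ∏ i, a (i + 1) = ∏ i, a i :=
    Fintype.prod_equiv (Equiv.addRight 1) _ _ fun _ => rfl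
  rw [prod_mul_distrib, prod_mul_distrib, hγ.prod_eq_neg_one_s15, hshift] at hpos
  nlinarith [mul_self_nonneg (∏ i, a i)]

end IsSignVector

theorem exists_vertex_ge_of_affine {ι : Type*} [Fintype ι] [DecidableEq ι] {f : (ι → ℝ) → ℝ}
    (hf : ∀ x j, f x = (1 - x j) * f (Function.update x j 0) + x j * f (Function.update x j 1))
    {x : ι → ℝ} (hx : ∀ i, x i ∈ Set.Icc (0 : ℝ) 1) :
    ∃ y : ι → ℝ, (∀ i, y i = 0 ∨ y i = 1) ∧ f x ≤ f y := by
  suffices h : ∀ s : Finset ι, ∀ x : ι → ℝ, (∀ i, x i ∈ Set.Icc (0 : ℝ) 1) →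
      (∀ i ∉ s, x i = 0 ∨ x i = 1) → ∃ y : ι → ℝ, (∀ i, y i = 0 ∨ y i = 1) ∧ f x ≤ f y from
    h univ x hx (by simp)
  intro s
  induction s using Finset.induction_on with
  | empty => exact fun x _ hx => ⟨x, fun i => hx i (notMem_empty i), le_rfl⟩
  | insert j s _ ih =>
    intro x hx hxs
    -- `f x` is a convex combination of the values at the two updates, so one of them dominates it
    obtain ⟨v, hv, hfv⟩ : ∃ v : ℝ, (v = 0 ∨ v = 1) ∧ f x ≤ f (Function.update x j v) := by
      have := hx j
      rw [hf x j]
      rcases le_total (f (Function.update x j 0)) (f (Function.update x j 1)) with h | h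
      · exact ⟨1, Or.inr rfl, by nlinarith [this.1, this.2]⟩
      · exact ⟨0, Or.inl rfl, by nlinarith [this.1, this.2]⟩
    have hv' : v ∈ Set.Icc (0 : ℝ) 1 := by rcases hv with rfl | rfl <;> simp
    obtain ⟨y, hy, hfy⟩ := ih (Function.update x j v)
      (fun i => by rcases eq_or_ne i j with rfl | h <;> simp [*])
      (fun i hi => by
        rcases eq_or_ne i j with rfl | h
        · simpa using hv
        · simpa [h] using hxs i (by simp [h, hi]))
    exact ⟨y, hy, hfv.trans hfy⟩

theorem one_sub_two_div_nonneg {n : ℕ} (hn : 2 ≤ n) : 0 ≤ 1 - 2 / (n : ℝ) := by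
  rw [sub_nonneg, div_le_one (by positivity)]
  exact_mod_cast hn

section FrustratedForm

variable {n : ℕ} [NeZero n]

/-- The bound `|a_i| + d_i ≤ 1` lets `d_i d_{i+1}` be replaced by `(1 - x_i)(1 - x_{i+1})` with
`x_i = |a_i|`; the edge `i₀` is the one with `γ_{i₀} a_{i₀} a_{i₀+1} ≤ 0`. -/
noncomputable def frustratedForm (c : ℝ) (i₀ : ZMod n) (x : ZMod n → ℝ) : ℝ :=
  ∑ i, ((if i = i₀ then -1 else 1) * (x i * x (i + 1)) + c * ((1 - x i) * (1 - x (i + 1))))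

theorem frustratedForm_eq_update (hn : n ≠ 1) (c : ℝ) (i₀ : ZMod n) (x : ZMod n → ℝ)
    (j : ZMod n) :
    frustratedForm c i₀ x = (1 - x j) * frustratedForm c i₀ (Function.update x j 0)
      + x j * frustratedForm c i₀ (Function.update x j 1) := by
  simp only [frustratedForm, mul_sum, ← sum_add_distrib]
  refine sum_congr rfl fun i _ => ?_
  have hi := ZMod.self_ne_add_one hn i
  by_cases hij : i = j
  · subst hij
    simp only [Function.update_self, Function.update_of_ne hi.symm]
    ring
  · by_cases hij' : i + 1 = j
    · subst hij'
      simp only [Function.update_self, Function.update_of_ne hi]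
      ring
    · simp only [Function.update_of_ne hij, Function.update_of_ne hij']
      ring

theorem frustratedForm_eq (c : ℝ) (i₀ : ZMod n) (x : ZMod n → ℝ) :
    frustratedForm c i₀ x = (1 + c) * ∑ i, x i * x (i + 1) + c * (n - 2 * ∑ i, x i)
      - 2 * (x i₀ * x (i₀ + 1)) := by
  have hterm : ∀ i, (if i = i₀ then -1 else 1) * (x i * x (i + 1))
      + c * ((1 - x i) * (1 - x (i + 1))) = (1 + c) * (x i * x (i + 1)) + c - c * x i
        - c * x (i + 1) - if i = i₀ then 2 * (x i * x (i + 1)) else 0 := by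
    intro i
    split_ifs <;> ring
  have hshift : ∑ i, x (i + 1) = ∑ i, x i := Fintype.sum_equiv (Equiv.addRight 1) _ _ fun _ => rfl
  simp only [frustratedForm, hterm, sum_sub_distrib, sum_add_distrib, ← mul_sum, sum_const,
    sum_ite_eq', mem_univ, if_true, card_univ, ZMod.card, nsmul_eq_mul, hshift]
  ring

theorem frustratedForm_le_of_boolean {c : ℝ} (hc1 : c ≤ 1) (hcn : n * (1 - c) ≤ 2)
    (i₀ : ZMod n) {x : ZMod n → ℝ} (hx : ∀ i, x i = 0 ∨ x i = 1) :
    frustratedForm c i₀ x ≤ n * c := by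
  have hx01 : ∀ i, 0 ≤ x i ∧ x i ≤ 1 := fun i => by rcases hx i with h | h <;> simp [h]
  rw [frustratedForm_eq]
  by_cases hjump : ∃ j, x j = 1 ∧ x (j + 1) = 0
  · obtain ⟨j, hj, hj'⟩ := hjump
    have hS : 1 ≤ ∑ i, (1 - x i) := by
      simpa [hj'] using single_le_sum (fun i _ => sub_nonneg.2 (hx01 i).2) (mem_univ (j + 1))
    have hP : 1 ≤ ∑ i, x i * (1 - x (i + 1)) := by
      simpa [hj, hj'] using single_le_sum
        (fun i _ => mul_nonneg (hx01 i).1 (sub_nonneg.2 (hx01 (i + 1)).2)) (mem_univ j)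
    simp only [sum_sub_distrib, mul_sub, mul_one, sum_const, card_univ, ZMod.card,
      nsmul_eq_mul] at hS hP
    have hn1 : (1 : ℝ) ≤ n := by exact_mod_cast NeZero.one_le
    nlinarith [mul_nonneg (hx01 i₀).1 (hx01 (i₀ + 1)).1,
      mul_le_mul_of_nonneg_left hP (by nlinarith : 0 ≤ 1 + c),
      mul_le_mul_of_nonneg_left hS (by linarith : 0 ≤ 1 - c)]
  · push Not at hjump
    have hup : ∀ i, x i = 1 → x (i + 1) = 1 := fun i hi => (hx (i + 1)).resolve_left (hjump i hi)
    obtain ⟨v, hv, hxv⟩ : ∃ v : ℝ, (v = 0 ∨ v = 1) ∧ ∀ i, x i = v := by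
      by_cases h : ∃ k, x k = 1
      · obtain ⟨k, hk⟩ := h
        exact ⟨1, Or.inr rfl, ZMod.forall_of_imp_add_one hup hk⟩
      · push Not at h
        exact ⟨0, Or.inl rfl, fun i => (hx i).resolve_right (h i)⟩
    simp only [hxv, sum_const, card_univ, ZMod.card, nsmul_eq_mul]
    rcases hv with rfl | rfl <;> nlinarith

theorem IsSignVector.sum_le_of_abs_add_le_one {γ : ZMod n → ℝ} (hγ : IsSignVector n γ)
    (hn : 2 ≤ n) {c : ℝ} (hc : 1 - 2 / (n : ℝ) ≤ c) (hc1 : c ≤ 1) (a d : ZMod n → ℝ)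
    (hd : ∀ i, 0 ≤ d i) (had : ∀ i, |a i| + d i ≤ 1) :
    ∑ i, (γ i * (a i * a (i + 1)) + c * (d i * d (i + 1))) ≤ n * c := by
  have hn' : (2 : ℝ) ≤ n := by exact_mod_cast hn
  have hcn : n * (1 - c) ≤ 2 := by
    have := (le_div_iff₀ (by linarith)).1 (by linarith : 1 - c ≤ 2 / (n : ℝ))
    linarith
  have hc0 : 0 ≤ c := (one_sub_two_div_nonneg hn).trans hc
  obtain ⟨i₀, hi₀⟩ := hγ.exists_mul_nonpos a
  have hterm : ∀ i, γ i * (a i * a (i + 1)) + c * (d i * d (i + 1))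
      ≤ (if i = i₀ then -1 else 1) * (|a i| * |a (i + 1)|)
        + c * ((1 - |a i|) * (1 - |a (i + 1)|)) := by
    intro i
    have hdd : d i * d (i + 1) ≤ (1 - |a i|) * (1 - |a (i + 1)|) :=
      mul_le_mul (by linarith [had i]) (by linarith [had (i + 1)]) (hd _)
        (by linarith [had i, hd i])
    have habs : |γ i * (a i * a (i + 1))| = |a i| * |a (i + 1)| := by
      rw [abs_mul, hγ.abs_eq_one_s15, one_mul, abs_mul]
    have := mul_le_mul_of_nonneg_left hdd hc0
    split_ifs with h
    · subst h
      linarith [abs_of_nonpos hi₀]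
    · linarith [le_abs_self (γ i * (a i * a (i + 1)))]
  obtain ⟨y, hy, hxy⟩ := exists_vertex_ge_of_affine
    (frustratedForm_eq_update (by omega) c i₀) (x := fun i => |a i|)
    (fun i => ⟨abs_nonneg _, by linarith [had i, hd i]⟩)
  calc _ ≤ frustratedForm c i₀ (fun i => |a i|) := sum_le_sum fun i _ => hterm i
    _ ≤ frustratedForm c i₀ y := hxy
    _ ≤ n * c := frustratedForm_le_of_boolean hc1 hcn i₀ hy

end FrustratedForm

section NoisyPR

variable {n : ℕ}

@[simp] theorem sval_true : sval true = 1 := rfl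

@[simp] theorem sval_false : sval false = -1 := rfl

/-- The weight of `B_PR` in `F(α)` once `B_NPR` is expanded: `α + (1 - α)(n - 2)/n`. -/
noncomputable def visibility (n : ℕ) (α : ℝ) : ℝ := 1 - 2 * (1 - α) / n

noncomputable def noisyBPR (n : ℕ) (γ : ZMod n → ℝ) (c : ℝ) : ZMod n → Bool → Bool → ℝ :=
  fun i a b => (1 + c * γ i * (sval a * sval b)) / 4

theorem Fmix_eq_noisyBPR [NeZero n] (γ : ZMod n → ℝ) (α : ℝ) :
    Fmix n γ α = noisyBPR n γ (visibility n α) := by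
  have hn : (n : ℝ) ≠ 0 := Nat.cast_ne_zero.2 (NeZero.ne n)
  funext i a b
  simp only [Fmix, BPR, BNPR, noisyBPR, visibility]
  field_simp
  ring

theorem visibility_strictMono [NeZero n] : StrictMono (visibility n) := by
  intro α β h
  have : (0 : ℝ) < n := Nat.cast_pos.2 (Nat.pos_of_ne_zero (NeZero.ne n))
  simp only [visibility]
  gcongr

theorem one_sub_two_div_le_visibility [NeZero n] {α : ℝ} (hα : 0 ≤ α) :
    1 - 2 / (n : ℝ) ≤ visibility n α := by
  have : (0 : ℝ) < n := Nat.cast_pos.2 (Nat.pos_of_ne_zero (NeZero.ne n))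
  simp only [visibility]
  gcongr
  linarith

theorem visibility_le_one {α : ℝ} (hα : α ≤ 1) : visibility n α ≤ 1 := by
  simp only [visibility, sub_le_self_iff]
  have : 0 ≤ 1 - α := by linarith
  positivity

theorem visibility_nonneg (hn : 2 ≤ n) {α : ℝ} (hα : 0 ≤ α) : 0 ≤ visibility n α := by
  have : NeZero n := ⟨by omega⟩
  exact (one_sub_two_div_nonneg hn).trans (one_sub_two_div_le_visibility hα)

theorem sum_noisyBPR (γ : ZMod n → ℝ) (c : ℝ) (i : ZMod n) :
    ∑ a : Bool, ∑ b : Bool, noisyBPR n γ c i a b = 1 := by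
  simp only [noisyBPR, Fintype.sum_bool, sval_true, sval_false]
  ring

/-- The correlator `⟨X_i X_{i+1}⟩_p`. -/
def corr (p : ZMod n → Bool → Bool → ℝ) (i : ZMod n) : ℝ :=
  ∑ a : Bool, ∑ b : Bool, sval a * sval b * p i a b

theorem corr_noisyBPR (γ : ZMod n → ℝ) (c : ℝ) (i : ZMod n) :
    corr (noisyBPR n γ c) i = c * γ i := by
  simp only [corr, noisyBPR, Fintype.sum_bool, sval_true, sval_false]
  ring

theorem OmegaNC_eq_sum_corr [NeZero n] (γ : ZMod n → ℝ) (p : ZMod n → Bool → Bool → ℝ) :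
    OmegaNC n γ p = ∑ i, γ i * corr p i := rfl

theorem IsSignVector.OmegaNC_noisyBPR [NeZero n] {γ : ZMod n → ℝ} (hγ : IsSignVector n γ)
    (c : ℝ) : OmegaNC n γ (noisyBPR n γ c) = n * c := by
  simp only [OmegaNC_eq_sum_corr, corr_noisyBPR, mul_left_comm _ c, hγ.mul_self_eq_one,
    mul_one, sum_const, card_univ, ZMod.card, nsmul_eq_mul]

theorem OmegaNC_sum_mul [NeZero n] {ι : Type*} (γ : ZMod n → ℝ) (s : Finset ι) (w : ι → ℝ)
    (P : ι → ZMod n → Bool → Bool → ℝ) :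
    OmegaNC n γ (fun i a b => ∑ l ∈ s, w l * P l i a b) = ∑ l ∈ s, w l * OmegaNC n γ (P l) := by
  simp only [OmegaNC, Fintype.sum_bool, mul_sum, ← sum_add_distrib]
  rw [sum_comm]
  refine sum_congr rfl fun l _ => sum_congr rfl fun i _ => ?_
  ring

end NoisyPR

namespace NCWiring

noncomputable def mixUniform (n : ℕ) (μ : ℝ) (h0 : 0 ≤ μ) (h1 : μ ≤ 1) : NCWiring n where
  Λ := {0, 1}
  ρ l := if l = 0 then μ else 1 - μ
  ρ_nonneg l _ := by split_ifs <;> linarith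
  ρ_sum := by simp
  R := {0}
  q _ _ r := if r = 0 then 1 else 0
  q_nonneg _ _ r := by split_ifs <;> norm_num
  q_sum _ _ _ := by simp
  g i _ _ := i
  m _ _ s l t := if l = 0 then (if t = s then 1 else 0) else 1 / 2
  m_nonneg _ _ _ _ _ := by split_ifs <;> norm_num
  m_sum _ _ s l := by cases s <;> split_ifs <;> simp_all

variable {n : ℕ}

theorem mixUniform_apply (μ : ℝ) (h0 : 0 ≤ μ) (h1 : μ ≤ 1) (p : ZMod n → Bool → Bool → ℝ) :
    (mixUniform n μ h0 h1).apply p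
      = fun i t t' => μ * p i t t' + (1 - μ) * ((∑ s : Bool, ∑ s' : Bool, p i s s') / 4) := by
  funext i t t'
  simp only [apply, mixUniform, sum_pair zero_ne_one, sum_singleton, Fintype.sum_bool]
  cases t <;> cases t' <;>
    simp only [↓reduceIte, Bool.false_eq_true, Bool.true_eq_false, one_ne_zero] <;> ring

end NCWiring

theorem noisyBPR_convertsTo {n : ℕ} (γ : ZMod n → ℝ) {c c' : ℝ} (hc' : 0 ≤ c') (hc : c' ≤ c) :
    NCConvertsTo n (noisyBPR n γ c) (noisyBPR n γ c') := by
  have hμ0 : 0 ≤ c' / c := div_nonneg hc' (hc'.trans hc)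
  have hμ1 : c' / c ≤ 1 := div_le_one_of_le₀ hc (hc'.trans hc)
  have hμc : c' / c * c = c' := div_mul_cancel_of_imp fun h => le_antisymm (h ▸ hc) hc'
  refine ⟨NCWiring.mixUniform n (c' / c) hμ0 hμ1, ?_⟩
  rw [NCWiring.mixUniform_apply]
  funext i t t'
  rw [sum_noisyBPR]
  simp only [noisyBPR]
  linear_combination (γ i * (sval t * sval t') / 4) * hμc

theorem sum_sum_mul_le {ι κ : Type*} (s : Finset ι) (t : Finset κ) {w : ι → ℝ} {w' : κ → ℝ}
    (hw : ∀ r, 0 ≤ w r) (hw' : ∀ r', 0 ≤ w' r') (τ : ℝ) {c : ℝ} (hc : 0 ≤ c)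
    (M G : ι → ℝ) (M' G' : κ → ℝ) {σ : ι → κ → ℝ} (hσ : ∀ r r', |σ r r'| ≤ 1) :
    ∑ r ∈ s, ∑ r' ∈ t, w r * w' r' * (τ * (M r * M' r') + c * σ r r' * (G r * G' r'))
      ≤ τ * ((∑ r ∈ s, w r * M r) * ∑ r' ∈ t, w' r' * M' r')
        + c * ((∑ r ∈ s, w r * |G r|) * ∑ r' ∈ t, w' r' * |G' r'|) := by
  rw [sum_mul_sum, sum_mul_sum]
  simp only [mul_sum, ← sum_add_distrib]
  refine sum_le_sum fun r _ => sum_le_sum fun r' _ => ?_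
  have hσG : σ r r' * (G r * G' r') ≤ |G r| * |G' r'| := by
    calc σ r r' * (G r * G' r') ≤ |σ r r' * (G r * G' r')| := le_abs_self _
      _ ≤ |G r| * |G' r'| := by
        rw [abs_mul, abs_mul]
        exact mul_le_of_le_one_left (by positivity) (hσ r r')
  have := mul_le_mul_of_nonneg_left (mul_le_mul_of_nonneg_left hσG hc)
    (mul_nonneg (hw r) (hw' r'))
  linarith

namespace NCWiring

variable {n : ℕ} (W : NCWiring n)

def component (p : ZMod n → Bool → Bool → ℝ) (l : ℕ) : ZMod n → Bool → Bool → ℝ :=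
  fun i t t' => ∑ r ∈ W.R, ∑ r' ∈ W.R, W.q i l r * W.q (i + 1) l r' *
    ∑ s : Bool, ∑ s' : Bool, p (W.g i r r') s s' * W.m i r s l t * W.m (i + 1) r' s' l t'

theorem apply_eq_sum_component (p : ZMod n → Bool → Bool → ℝ) :
    W.apply p = fun i t t' => ∑ l ∈ W.Λ, W.ρ l * W.component p l i t t' := rfl

def bias (j : ZMod n) (r : ℕ) (s : Bool) (l : ℕ) : ℝ := W.m j r s l true - W.m j r s l false

theorem abs_bias_le_one (j : ZMod n) (r : ℕ) (s : Bool) (l : ℕ) : |W.bias j r s l| ≤ 1 := by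
  have h := W.m_sum j r s l
  have := W.m_nonneg j r s l true
  have := W.m_nonneg j r s l false
  rw [Fintype.sum_bool] at h
  exact abs_le.2 ⟨by unfold bias; linarith, by unfold bias; linarith⟩

/-- `bias j r s l = biasMean j r l + biasSlope j r l * sval s`. -/
noncomputable def biasMean (j : ZMod n) (r l : ℕ) : ℝ :=
  (W.bias j r true l + W.bias j r false l) / 2

noncomputable def biasSlope (j : ZMod n) (r l : ℕ) : ℝ :=
  (W.bias j r true l - W.bias j r false l) / 2

theorem abs_biasMean_add_abs_biasSlope_le_one (j : ZMod n) (r l : ℕ) :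
    |W.biasMean j r l| + |W.biasSlope j r l| ≤ 1 := by
  have h₁ := abs_le.1 (W.abs_bias_le_one j r true l)
  have h₂ := abs_le.1 (W.abs_bias_le_one j r false l)
  unfold biasMean biasSlope
  rcases abs_cases ((W.bias j r true l + W.bias j r false l) / 2) with ⟨e₁, _⟩ | ⟨e₁, _⟩ <;>
    rcases abs_cases ((W.bias j r true l - W.bias j r false l) / 2) with ⟨e₂, _⟩ | ⟨e₂, _⟩ <;>
    linarith

theorem corr_component_noisyBPR (γ : ZMod n → ℝ) (c : ℝ) (l : ℕ) (i : ZMod n) :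
    corr (W.component (noisyBPR n γ c) l) i
      = ∑ r ∈ W.R, ∑ r' ∈ W.R, W.q i l r * W.q (i + 1) l r' *
          (W.biasMean i r l * W.biasMean (i + 1) r' l
            + c * γ (W.g i r r') * (W.biasSlope i r l * W.biasSlope (i + 1) r' l)) := by
  simp only [corr, component, Fintype.sum_bool, mul_sum, ← sum_add_distrib]
  refine sum_congr rfl fun r _ => sum_congr rfl fun r' _ => ?_
  simp only [noisyBPR, biasMean, biasSlope, bias, sval_true, sval_false]
  ring

noncomputable def marginalBias (l : ℕ) (i : ZMod n) : ℝ := ∑ r ∈ W.R, W.q i l r * W.biasMean i r l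

noncomputable def sensitivity (l : ℕ) (i : ZMod n) : ℝ :=
  ∑ r ∈ W.R, W.q i l r * |W.biasSlope i r l|

theorem sensitivity_nonneg (l : ℕ) (i : ZMod n) : 0 ≤ W.sensitivity l i :=
  sum_nonneg fun r _ => mul_nonneg (W.q_nonneg i l r) (abs_nonneg _)

theorem abs_marginalBias_add_sensitivity_le_one {l : ℕ} (hl : l ∈ W.Λ) (i : ZMod n) :
    |W.marginalBias l i| + W.sensitivity l i ≤ 1 := by
  calc |W.marginalBias l i| + W.sensitivity l i
      ≤ ∑ r ∈ W.R, W.q i l r * (|W.biasMean i r l| + |W.biasSlope i r l|) := by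
        have := abs_sum_le_sum_abs (fun r => W.q i l r * W.biasMean i r l) W.R
        simp only [abs_mul, abs_of_nonneg (W.q_nonneg i l _)] at this
        simp only [marginalBias, sensitivity, mul_add, sum_add_distrib]
        linarith
    _ ≤ ∑ r ∈ W.R, W.q i l r := sum_le_sum fun r _ =>
        mul_le_of_le_one_right (W.q_nonneg i l r) (W.abs_biasMean_add_abs_biasSlope_le_one i r l)
    _ = 1 := W.q_sum i l hl

theorem mul_corr_component_noisyBPR_le {γ : ZMod n → ℝ} (hγ : IsSignVector n γ) {c : ℝ}
    (hc : 0 ≤ c) (l : ℕ) (i : ZMod n) :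
    γ i * corr (W.component (noisyBPR n γ c) l) i
      ≤ γ i * (W.marginalBias l i * W.marginalBias l (i + 1))
        + c * (W.sensitivity l i * W.sensitivity l (i + 1)) := by
  have h := sum_sum_mul_le W.R W.R (W.q_nonneg i l) (W.q_nonneg (i + 1) l) (γ i) hc
    (W.biasMean i · l) (W.biasSlope i · l) (W.biasMean (i + 1) · l) (W.biasSlope (i + 1) · l)
    (σ := fun r r' => γ i * γ (W.g i r r'))
    (fun r r' => by rw [abs_mul, hγ.abs_eq_one_s15, hγ.abs_eq_one_s15, one_mul])
  refine le_trans (le_of_eq ?_) h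
  rw [corr_component_noisyBPR, mul_sum]
  refine sum_congr rfl fun r _ => ?_
  rw [mul_sum]
  refine sum_congr rfl fun r' _ => ?_
  ring

end NCWiring

section WiringBound

variable {n : ℕ} [NeZero n] {γ : ZMod n → ℝ}

theorem OmegaNC_component_noisyBPR_le (hγ : IsSignVector n γ) (hn : 2 ≤ n) {c : ℝ}
    (hc : 1 - 2 / (n : ℝ) ≤ c) (hc1 : c ≤ 1) (W : NCWiring n) {l : ℕ} (hl : l ∈ W.Λ) :
    OmegaNC n γ (W.component (noisyBPR n γ c) l) ≤ n * c := by
  have hc0 : 0 ≤ c := (one_sub_two_div_nonneg hn).trans hc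
  calc OmegaNC n γ (W.component (noisyBPR n γ c) l)
      ≤ ∑ i, (γ i * (W.marginalBias l i * W.marginalBias l (i + 1))
          + c * (W.sensitivity l i * W.sensitivity l (i + 1))) :=
        sum_le_sum fun i _ => W.mul_corr_component_noisyBPR_le hγ hc0 l i
    _ ≤ n * c := hγ.sum_le_of_abs_add_le_one hn hc hc1 _ _ (W.sensitivity_nonneg l)
        (W.abs_marginalBias_add_sensitivity_le_one hl)

theorem OmegaNC_apply_noisyBPR_le (hγ : IsSignVector n γ) (hn : 2 ≤ n) {c : ℝ}
    (hc : 1 - 2 / (n : ℝ) ≤ c) (hc1 : c ≤ 1) (W : NCWiring n) :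
    OmegaNC n γ (W.apply (noisyBPR n γ c)) ≤ n * c := by
  rw [W.apply_eq_sum_component, OmegaNC_sum_mul]
  calc ∑ l ∈ W.Λ, W.ρ l * OmegaNC n γ (W.component (noisyBPR n γ c) l)
      ≤ ∑ l ∈ W.Λ, W.ρ l * (n * c) := sum_le_sum fun l hl =>
        mul_le_mul_of_nonneg_left (OmegaNC_component_noisyBPR_le hγ hn hc hc1 W hl)
          (W.ρ_nonneg l hl)
    _ = n * c := by rw [← sum_mul, W.ρ_sum, one_mul]

end WiringBound

section Fmix

variable {n : ℕ} [NeZero n]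

theorem Fmix_convertsTo (hn : 2 ≤ n) (γ : ZMod n → ℝ) {α β : ℝ} (hβ : 0 ≤ β) (hβα : β ≤ α) :
    NCConvertsTo n (Fmix n γ α) (Fmix n γ β) := by
  rw [Fmix_eq_noisyBPR, Fmix_eq_noisyBPR]
  exact noisyBPR_convertsTo γ (visibility_nonneg hn hβ) (visibility_strictMono.monotone hβα)

theorem Fmix_not_convertsTo {γ : ZMod n → ℝ} (hγ : IsSignVector n γ) (hn : 2 ≤ n) {α α' : ℝ}
    (hα : 0 ≤ α) (hlt : α < α') (hα' : α' ≤ 1) : ¬ NCConvertsTo n (Fmix n γ α) (Fmix n γ α') := by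
  rintro ⟨W, hW⟩
  have hle := OmegaNC_apply_noisyBPR_le hγ hn (one_sub_two_div_le_visibility hα)
    (visibility_le_one (hlt.le.trans hα')) W
  rw [← Fmix_eq_noisyBPR, hW, Fmix_eq_noisyBPR, hγ.OmegaNC_noisyBPR] at hle
  have hpos : (0 : ℝ) < n := Nat.cast_pos.2 (Nat.pos_of_ne_zero (NeZero.ne n))
  exact (mul_lt_mul_of_pos_left (visibility_strictMono hlt) hpos).not_ge hle

end Fmix

/-- for all `0 ≤ α < α' ≤ 1`, `F(α') → F(α)` but not `F(α) → F(α')`;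
moreover every `F(α)` with `α ∈ [0,1]` lies in the interval between `F(1) = B_PR` and
`F(0) = B_NPR` (i.e. `F(1) → F(α)` and `F(α) → F(0)`), and distinct members of the
family are inequivalent. Hence `{F(α) : α ∈ [0,1]}` is a strictly ordered chain with
infinitely many pairwise inequivalent elements, so the convertibility pre-order has
infinite height and is locally infinite. -/
theorem Fmix_strict_chain (n : ℕ) [NeZero n] (hn : 3 ≤ n)
    (γ : ZMod n → ℝ) (hγ : IsSignVector n γ) :
    (∀ α α' : ℝ, 0 ≤ α → α < α' → α' ≤ 1 →
      NCConvertsTo n (Fmix n γ α') (Fmix n γ α) ∧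
        ¬ NCConvertsTo n (Fmix n γ α) (Fmix n γ α')) ∧
    (∀ α ∈ Set.Icc (0 : ℝ) 1,
      NCConvertsTo n (Fmix n γ 1) (Fmix n γ α) ∧
        NCConvertsTo n (Fmix n γ α) (Fmix n γ 0)) ∧
    (∀ α ∈ Set.Icc (0 : ℝ) 1, ∀ α' ∈ Set.Icc (0 : ℝ) 1, α ≠ α' →
      ¬ (NCConvertsTo n (Fmix n γ α) (Fmix n γ α') ∧
          NCConvertsTo n (Fmix n γ α') (Fmix n γ α))) := by
  have hn2 : 2 ≤ n := by omega
  refine ⟨fun α α' hα hlt hα' => ⟨Fmix_convertsTo hn2 γ hα hlt.le,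
      Fmix_not_convertsTo hγ hn2 hα hlt hα'⟩,
    fun α hα => ⟨Fmix_convertsTo hn2 γ hα.1 hα.2, Fmix_convertsTo hn2 γ le_rfl hα.1⟩, ?_⟩
  rintro α hα α' hα' hne ⟨h, h'⟩
  rcases hne.lt_or_gt with hlt | hlt
  · exact Fmix_not_convertsTo hγ hn2 hα.1 hlt hα'.2 h
  · exact Fmix_not_convertsTo hγ hn2 hα'.1 hlt hα.2 h'
end
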